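/- There exist a measurable space (Ω̄, 𝒢), a 𝒢-measurable random variable Y : Ω̄ → ℝ², a nonempty convex set 𝒬 of probability measures on (Ω̄, 𝒢), and P ∈ 𝒬 such that NA({P}) holds but the one-period no-arbitrage condition NA(𝒬) fails. In particular, the weak no-arbitrage condition (existence of one arbitrage-free prior in the set) does not imply the quasi-sure no-arbitrage condition. -/

import Mathlib

open MeasureTheory Set
open scoped ENNReal

/-!
Take `Ω = {0, 1, 2}` with payoffs `Y = e₀, -e₀, e₁` and let `𝒬` be the priors charging `0` and `1`
equally. The prior `(δ₀ + δ₁) / 2` sees only the opposite payoffs `±e₀`, so it admits no arbitrage;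
but `h = e₁` has `h·Y ≥ 0` everywhere and is an arbitrage under `δ₂ ∈ 𝒬`.
-/

/-- One-period no-arbitrage condition for an `ℝ²`-valued payoff `Y`:
`h·Y ≥ 0` 𝒬-q.s. implies `h·Y = 0` 𝒬-q.s. -/
def NA2 {Ω : Type*} [MeasurableSpace Ω] (𝒬 : Set (Measure Ω))
    (Y : Ω → EuclideanSpace ℝ (Fin 2)) : Prop :=
  ∀ h : EuclideanSpace ℝ (Fin 2),
    (∀ P ∈ 𝒬, ∀ᵐ ω ∂P, 0 ≤ (inner ℝ h (Y ω) : ℝ)) →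
    ∀ P ∈ 𝒬, ∀ᵐ ω ∂P, (inner ℝ h (Y ω) : ℝ) = 0

section

variable {Ω : Type*} [MeasurableSpace Ω]

lemma MeasureTheory.isProbabilityMeasure_smul_add_one_sub_smul {μ ν : Measure Ω}
    [IsProbabilityMeasure μ] [IsProbabilityMeasure ν] {t : ℝ≥0∞} (ht : t ≤ 1) :
    IsProbabilityMeasure (t • μ + (1 - t) • ν) :=
  ⟨by simp [add_tsub_cancel_of_le ht]⟩

lemma MeasureTheory.ae_smul_dirac_add_smul_dirac_iff [MeasurableSingletonClass Ω]
    {c d : ℝ≥0∞} (hc : c ≠ 0) (hd : d ≠ 0) {a b : Ω} {p : Ω → Prop} :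
    (∀ᵐ ω ∂(c • Measure.dirac a + d • Measure.dirac b), p ω) ↔ p a ∧ p b := by
  simp only [ae_add_measure_iff, Measure.ae_ennreal_smul_measure_iff hc,
    Measure.ae_ennreal_smul_measure_iff hd, ae_dirac_eq, Filter.eventually_pure]

def equalMassPriors (s t : Set Ω) : Set (Measure Ω) :=
  {Q | IsProbabilityMeasure Q ∧ Q s = Q t}

lemma smul_add_one_sub_smul_mem_equalMassPriors {s t : Set Ω} {P₁ P₂ : Measure Ω}
    (h₁ : P₁ ∈ equalMassPriors s t) (h₂ : P₂ ∈ equalMassPriors s t) {r : ℝ≥0∞} (hr : r ≤ 1) :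
    r • P₁ + (1 - r) • P₂ ∈ equalMassPriors s t := by
  obtain ⟨hP₁, hP₁st⟩ := h₁
  obtain ⟨hP₂, hP₂st⟩ := h₂
  exact ⟨isProbabilityMeasure_smul_add_one_sub_smul hr, by simp [hP₁st, hP₂st]⟩

variable [MeasurableSingletonClass Ω]

lemma dirac_mem_equalMassPriors {a b c : Ω} (hca : c ≠ a) (hcb : c ≠ b) :
    Measure.dirac c ∈ equalMassPriors {a} {b} :=
  ⟨inferInstance, by simp [hca, hcb]⟩

lemma half_dirac_add_half_dirac_mem_equalMassPriors {a b : Ω} (hab : a ≠ b) :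
    (2⁻¹ : ℝ≥0∞) • Measure.dirac a + (2⁻¹ : ℝ≥0∞) • Measure.dirac b ∈ equalMassPriors {a} {b} :=
  ⟨⟨by simp [ENNReal.inv_two_add_inv_two]⟩, by simp [hab, hab.symm]⟩

lemma NA2_half_dirac_add_half_dirac {Y : Ω → EuclideanSpace ℝ (Fin 2)} {a b : Ω}
    (hY : Y b = -Y a) :
    NA2 {(2⁻¹ : ℝ≥0∞) • Measure.dirac a + (2⁻¹ : ℝ≥0∞) • Measure.dirac b} Y := by
  have h2 : (2⁻¹ : ℝ≥0∞) ≠ 0 := by simp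
  rintro h hpos P rfl
  obtain ⟨ha, hb⟩ := (ae_smul_dirac_add_smul_dirac_iff h2 h2).1 (hpos _ rfl)
  rw [hY, inner_neg_right] at hb
  rw [ae_smul_dirac_add_smul_dirac_iff h2 h2, hY, inner_neg_right]
  constructor <;> linarith

lemma not_NA2_of_dirac_mem {𝒬 : Set (Measure Ω)} {Y : Ω → EuclideanSpace ℝ (Fin 2)} {c : Ω}
    (hc : Measure.dirac c ∈ 𝒬) {h : EuclideanSpace ℝ (Fin 2)} (hpos : ∀ ω, 0 ≤ inner ℝ h (Y ω))
    (hne : inner ℝ h (Y c) ≠ 0) : ¬ NA2 𝒬 Y := by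
  intro hNA
  have := hNA h (fun _ _ ↦ .of_forall hpos) _ hc
  rw [ae_dirac_eq, Filter.eventually_pure] at this
  exact hne this

end

/-- There is a one-period market (with `d = 2`) and a nonempty convex set of
priors `𝒬` containing some `P` such that `NA({P})` holds but `NA(𝒬)` fails:
weak no-arbitrage does not imply quasi-sure no-arbitrage. -/
theorem wna_does_not_imply_na :
    ∃ (Ω : Type) (m : MeasurableSpace Ω) (Y : Ω → EuclideanSpace ℝ (Fin 2))
      (𝒬 : Set (@Measure Ω m)) (P : @Measure Ω m),
      @Measurable Ω (EuclideanSpace ℝ (Fin 2)) m inferInstance Y ∧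
      𝒬.Nonempty ∧
      (∀ Q ∈ 𝒬, @IsProbabilityMeasure Ω m Q) ∧
      (∀ P₁ ∈ 𝒬, ∀ P₂ ∈ 𝒬, ∀ t : ℝ≥0∞, t ≤ 1 → t • P₁ + (1 - t) • P₂ ∈ 𝒬) ∧
      P ∈ 𝒬 ∧
      @NA2 Ω m {P} Y ∧
      ¬ @NA2 Ω m 𝒬 Y := by
  let e : Fin 2 → EuclideanSpace ℝ (Fin 2) := fun i ↦ EuclideanSpace.single i 1
  have h2 : Measure.dirac (2 : Fin 3) ∈ equalMassPriors {0} {1} :=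
    dirac_mem_equalMassPriors (by decide) (by decide)
  refine ⟨Fin 3, ⊤, ![e 0, -e 0, e 1], equalMassPriors {0} {1},
    (2⁻¹ : ℝ≥0∞) • Measure.dirac 0 + (2⁻¹ : ℝ≥0∞) • Measure.dirac 1, .of_discrete, ⟨_, h2⟩,
    fun _ hQ ↦ hQ.1, fun _ h₁ _ h₂ _ ↦ smul_add_one_sub_smul_mem_equalMassPriors h₁ h₂,
    half_dirac_add_half_dirac_mem_equalMassPriors (by decide), NA2_half_dirac_add_half_dirac rfl,
    not_NA2_of_dirac_mem (h := e 1) h2 ?_ (by simp [e])⟩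
  intro ω
  fin_cases ω <;> simp [e, EuclideanSpace.inner_single_left]
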